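/- Let u be a positive odd integer. For j, j' ∈ {0, 1, …, u−1} define the complex number a(j,j') = (−1)^{j+j'} e^{−2πi j j'/u} · u^{−1/2} · sin(uπ/2). Then for any j₁, j₂, j₃ ∈ {0, 1, …, u−1}, the Verlinde sum ∑_{j'=0}^{u−1} a(j₁,j') a(j₂,j') a(j₃,j') / a(0,j') equals (−1)^{j₁+j₂+j₃} if u divides j₁+j₂+j₃, and equals 0 otherwise. -/

import Mathlib

/-- The modular S-matrix entry for boundary principal admissible modules of affine `sl₂`
at level `k = 2/u - 2`:  `a(j,j') = (-1)^{j+j'} e^{-2πi j j'/u} u^{-1/2} sin(uπ/2)`. -/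
noncomputable def Ssl2 (u j j' : ℕ) : ℂ :=
  (-1) ^ (j + j') * Complex.exp (-2 * Real.pi * Complex.I * j * j' / u) *
    ((Real.sqrt u)⁻¹ : ℝ) * (Real.sin (u * Real.pi / 2) : ℝ)

/-- Verlinde's formula for the fusion coefficients of boundary principal admissible
modules of affine `sl₂`: for `u` a positive odd integer and `j₁, j₂, j₃ ∈ {0,…,u-1}`,
`∑_{j'=0}^{u-1} a(j₁,j') a(j₂,j') a(j₃,j') / a(0,j') = (-1)^{j₁+j₂+j₃}` if
`u ∣ j₁+j₂+j₃`, and `= 0` otherwise. -/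
theorem verlinde_sl2 (u : ℕ) (hu : 0 < u) (huodd : Odd u)
    (j₁ j₂ j₃ : ℕ) (h₁ : j₁ < u) (h₂ : j₂ < u) (h₃ : j₃ < u) :
    ∑ j' ∈ Finset.range u, Ssl2 u j₁ j' * Ssl2 u j₂ j' * Ssl2 u j₃ j' / Ssl2 u 0 j' =
      if u ∣ j₁ + j₂ + j₃ then (-1 : ℂ) ^ (j₁ + j₂ + j₃) else 0 := by
  have huC : (u : ℂ) ≠ 0 := Nat.cast_ne_zero.mpr hu.ne'
  set N := j₁ + j₂ + j₃ with hN
  set ζ : ℂ := Complex.exp (-2 * Real.pi * Complex.I * N / u) with hζ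
  obtain ⟨m, hm⟩ := huodd
  have hsin2 : Real.sin (u * Real.pi / 2) ^ 2 = 1 := by
    have h1 : (u : ℝ) * Real.pi / 2 = m * Real.pi + Real.pi / 2 := by
      rw [hm]; push_cast; ring
    rw [h1, Real.sin_add_pi_div_two]
    have h0 : Real.sin ((m : ℝ) * Real.pi) = 0 := Real.sin_nat_mul_pi m
    nlinarith [Real.sin_sq_add_cos_sq ((m : ℝ) * Real.pi)]
  have hsinne : Real.sin (u * Real.pi / 2) ≠ 0 := by
    intro h; rw [h] at hsin2; norm_num at hsin2
  have hsqrt : Real.sqrt u ≠ 0 :=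
    ne_of_gt (Real.sqrt_pos.mpr (by exact_mod_cast hu))
  set r : ℂ := (((Real.sqrt u)⁻¹ : ℝ) : ℂ) with hr
  set s : ℂ := ((Real.sin (u * Real.pi / 2) : ℝ) : ℂ) with hs
  have hw2 : r ^ 2 * s ^ 2 = (u : ℂ)⁻¹ := by
    rw [hr, hs]
    have h5 : ((Real.sqrt u)⁻¹) ^ 2 * (Real.sin (u * Real.pi / 2)) ^ 2 = (u : ℝ)⁻¹ := by
      rw [hsin2, mul_one, ← Real.sqrt_inv]
      exact Real.sq_sqrt (by positivity)
    rw [← Complex.ofReal_pow, ← Complex.ofReal_pow, ← Complex.ofReal_mul, h5]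
    push_cast
    ring
  have hrne : r ≠ 0 := by simp [hr, hsqrt]
  have hsne : s ≠ 0 := by rw [hs]; exact Complex.ofReal_ne_zero.mpr hsinne
  have hterm : ∀ j' : ℕ, Ssl2 u j₁ j' * Ssl2 u j₂ j' * Ssl2 u j₃ j' / Ssl2 u 0 j'
      = (-1 : ℂ) ^ N * ζ ^ j' / u := by
    intro j'
    have hE : Complex.exp (-2 * Real.pi * Complex.I * j₁ * j' / u) *
        Complex.exp (-2 * Real.pi * Complex.I * j₂ * j' / u) *
        Complex.exp (-2 * Real.pi * Complex.I * j₃ * j' / u) = ζ ^ j' := by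
      rw [hζ, ← Complex.exp_nat_mul, ← Complex.exp_add, ← Complex.exp_add]
      congr 1
      push_cast [hN]
      field_simp
      ring
    have hden : Ssl2 u 0 j' ≠ 0 := by
      unfold Ssl2
      simp only [Nat.cast_zero, mul_zero, zero_mul, zero_div]
      refine mul_ne_zero (mul_ne_zero (mul_ne_zero ?_ ?_) ?_) ?_
      · exact pow_ne_zero _ (by norm_num)
      · exact Complex.exp_ne_zero _
      · exact Complex.ofReal_ne_zero.mpr (inv_ne_zero hsqrt)
      · exact Complex.ofReal_ne_zero.mpr hsinne
    rw [div_eq_iff hden]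
    unfold Ssl2
    simp only [Nat.cast_zero, mul_zero, zero_mul, zero_div, Complex.exp_zero, zero_add,
      mul_one, one_mul]
    rw [← hr, ← hs]
    have ht2 : ((-1 : ℂ) ^ j') ^ 2 = 1 := by
      rw [← pow_mul, mul_comm, pow_mul]; norm_num
    rw [show j₁ + j' = j₁ + j' from rfl]
    rw [pow_add, pow_add, pow_add]
    set t : ℂ := (-1 : ℂ) ^ j'
    set Z : ℂ := ζ ^ j'
    linear_combination ((-1 : ℂ) ^ N * t ^ 3 * r ^ 3 * s ^ 3) * hE +
      ((-1 : ℂ) ^ N * Z * t ^ 3 * r * s) * hw2 +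
      ((-1 : ℂ) ^ N * Z * t * r * s * (u : ℂ)⁻¹) * ht2
  rw [Finset.sum_congr rfl fun j' _ => hterm j']
  rw [← Finset.sum_div, ← Finset.mul_sum]
  by_cases hdvd : u ∣ N
  · obtain ⟨k, hk⟩ := hdvd
    have hζ1 : ζ = 1 := by
      rw [hζ, hk]
      rw [show (-2 : ℂ) * Real.pi * Complex.I * ((u * k : ℕ) : ℂ) / u =
          ((-k : ℤ) : ℂ) * (2 * Real.pi * Complex.I) by push_cast; field_simp]
      exact Complex.exp_int_mul_two_pi_mul_I _
    rw [if_pos ⟨k, hk⟩]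
    simp [hζ1]
    field_simp
  · have hζu : ζ ^ u = 1 := by
      rw [hζ, ← Complex.exp_nat_mul]
      rw [show (u : ℂ) * (-2 * Real.pi * Complex.I * N / u) =
          ((-N : ℤ) : ℂ) * (2 * Real.pi * Complex.I) by push_cast; field_simp]
      exact Complex.exp_int_mul_two_pi_mul_I _
    have hζne : ζ ≠ 1 := by
      intro h
      rw [hζ, Complex.exp_eq_one_iff] at h
      obtain ⟨n, hn⟩ := h
      apply hdvd
      have hpi : (Real.pi : ℂ) ≠ 0 := by exact_mod_cast Real.pi_ne_zero
      have hpiI : (2 * (Real.pi : ℂ) * Complex.I) ≠ 0 := by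
        simp [hpi, Complex.I_ne_zero]
      field_simp at hn
      have h2 : (2 * (Real.pi : ℂ) * Complex.I) * (-(N : ℂ)) =
          (2 * (Real.pi : ℂ) * Complex.I) * ((n : ℂ) * u) := by linear_combination (2 * (Real.pi : ℂ) * Complex.I) * hn
      have h2' : -(N : ℂ) = (n : ℂ) * u := mul_left_cancel₀ hpiI h2
      have h3 : ((N : ℤ) : ℂ) = (((-n) * u : ℤ) : ℂ) := by push_cast; linear_combination -h2'
      have h4 : (N : ℤ) = (-n) * (u : ℤ) := by exact_mod_cast h3
      exact Int.natCast_dvd_natCast.mp ⟨-n, by rw [h4]; ring⟩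
    rw [if_neg hdvd]
    rw [geom_sum_eq hζne, hζu]
    simp
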